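/- arXiv:math/0507454 — 3 statements merged into one kernel-verified Lean document; each statement's English description precedes it below -/
import Mathlib

section
/- Let G : ℂ^{r+1} → ℝ be absolutely homogeneous of degree 2, smooth on ℂ^{r+1}∖{0}, and in addition of class C² on all of ℂ^{r+1}. Then G_{i j̄}(v) = G_{i j̄}(0) for every v ∈ ℂ^{r+1}∖{0} and all 0 ≤ i, j ≤ r, and consequently G(v) = Σ_{i,j=0}^{r} G_{i j̄}(0) · vⁱ · v̄ʲ for all v ∈ ℂ^{r+1}; that is, G is the quadratic form of the matrix h_{i j̄} = G_{i j̄}(0), which is Hermitian (h_{j ī} equals the complex conjugate of h_{i j̄}) since G is real-valued. -/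
/-- The Wirtinger derivative `∂f/∂vⁱ = ½(∂f/∂xⁱ − √−1·∂f/∂yⁱ)` of a function
`f : ℂⁿ → ℂ`, viewed as a smooth function of the real and imaginary parts of the
complex coordinates, evaluated at `v`. -/
noncomputable def wDeriv {n : ℕ} (i : Fin n) (f : (Fin n → ℂ) → ℂ) (v : Fin n → ℂ) : ℂ :=
  (1 / 2 : ℂ) * (fderiv ℝ f v (Pi.single i 1) - Complex.I * fderiv ℝ f v (Pi.single i Complex.I))

/-- The conjugate Wirtinger derivative `∂f/∂v̄ʲ = ½(∂f/∂xʲ + √−1·∂f/∂yʲ)`. -/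
noncomputable def wDerivBar {n : ℕ} (j : Fin n) (f : (Fin n → ℂ) → ℂ) (v : Fin n → ℂ) : ℂ :=
  (1 / 2 : ℂ) * (fderiv ℝ f v (Pi.single j 1) + Complex.I * fderiv ℝ f v (Pi.single j Complex.I))

/-- The Wirtinger Hessian `G_{i j̄} = ∂²G/∂vⁱ∂v̄ʲ` of a real-valued function `G : ℂⁿ → ℝ`. -/
noncomputable def hessW {n : ℕ} (i j : Fin n) (G : (Fin n → ℂ) → ℝ) (v : Fin n → ℂ) : ℂ :=
  wDeriv i (wDerivBar j (fun u => (G u : ℂ))) v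

section Aux

variable {r : ℕ} (G : (Fin (r + 1) → ℂ) → ℝ)

/-- decomposition of a complex scalar action into real parts -/
lemma aux_csmul (c : ℂ) (u : Fin (r + 1) → ℂ) :
    c • u = c.re • u + c.im • (Complex.I • u) := by
  funext k
  simp only [Pi.add_apply, Pi.smul_apply, smul_eq_mul, Complex.real_smul]
  linear_combination u k * (Complex.re_add_im c).symm

lemma aux_II (u : Fin (r + 1) → ℂ) : Complex.I • (Complex.I • u) = -u := by
  rw [smul_smul, Complex.I_mul_I, neg_one_smul]

lemma aux_singleI (j : Fin (r + 1)) :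
    (Pi.single j Complex.I : Fin (r + 1) → ℂ) = Complex.I • (Pi.single j 1 : Fin (r + 1) → ℂ) := by
  funext k
  by_cases h : k = j <;> simp [Pi.single_apply, h]

lemma aux_basis (v : Fin (r + 1) → ℂ) :
    ∑ i, v i • (Pi.single i 1 : Fin (r + 1) → ℂ) = v := by
  have h : ∀ i, v i • (Pi.single i 1 : Fin (r + 1) → ℂ) = Pi.single i (v i) := by
    intro i; funext k; by_cases h : k = i <;> simp [Pi.single_apply, h]
  simp_rw [h]
  exact Finset.univ_sum_single v

end Aux

set_option maxHeartbeats 1000000 in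
/-- Remark (3.11), fiberwise: if `G` is absolutely homogeneous of degree 2, smooth away
from the origin, and of class C² on all of `ℂ^{r+1}`, then its Wirtinger Hessian is
constant, `G` is the quadratic form of the Hermitian matrix `h_{i j̄} = G_{i j̄}(0)`. -/
theorem stmt_3 {r : ℕ} (G : (Fin (r + 1) → ℂ) → ℝ)
    (hhom : ∀ (l : ℂ) (v : Fin (r + 1) → ℂ), G (l • v) = ‖l‖ ^ 2 * G v)
    (hsm : ContDiffOn ℝ (⊤ : ℕ∞) G {v | v ≠ 0})
    (hC2 : ContDiff ℝ 2 G) :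
    (∀ v : Fin (r + 1) → ℂ, v ≠ 0 → ∀ i j : Fin (r + 1), hessW i j G v = hessW i j G 0) ∧
    (∀ v : Fin (r + 1) → ℂ,
      (G v : ℂ) = ∑ i : Fin (r + 1), ∑ j : Fin (r + 1),
        hessW i j G 0 * v i * (starRingEnd ℂ) (v j)) ∧
    (∀ i j : Fin (r + 1), hessW j i G 0 = (starRingEnd ℂ) (hessW i j G 0)) := by
  have hdiff : ∀ y, HasFDerivAt G (fderiv ℝ G y) y := fun y =>
    ((hC2.differentiable (by norm_num)) y).hasFDerivAt
  have hf'diff : ContDiff ℝ 1 (fderiv ℝ G) := hC2.fderiv_right (by norm_num)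
  set A : (Fin (r+1) → ℂ) →L[ℝ] (Fin (r+1) → ℂ) →L[ℝ] ℝ := fderiv ℝ (fderiv ℝ G) 0 with hA_def
  have hA : HasFDerivAt (fderiv ℝ G) A 0 :=
    ((hf'diff.differentiable one_ne_zero) 0).hasFDerivAt
  have hsymm : ∀ u w, A u w = A w u := second_derivative_symmetric hdiff hA
  -- real homogeneity
  have hreal : ∀ (t : ℝ) (v : Fin (r+1) → ℂ), G (t • v) = t ^ 2 * G v := by
    intro t v
    have h1 : (t : ℂ) • v = t • v := by
      funext k; simp [Pi.smul_apply, Complex.real_smul]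
    have := hhom (t : ℂ) v
    rw [h1] at this
    simpa [Complex.norm_real, Real.norm_eq_abs, sq_abs] using this
  have line : ∀ (v : Fin (r+1) → ℂ) (t : ℝ), HasDerivAt (fun s : ℝ => s • v) v t := by
    intro v t
    simpa using (hasDerivAt_id t).smul_const v
  have phi_eq : ∀ (v : Fin (r+1) → ℂ) (t : ℝ), fderiv ℝ G (t • v) v = 2 * t * G v := by
    intro v t
    have h1 : HasDerivAt (fun s : ℝ => G (s • v)) (fderiv ℝ G (t • v) v) t :=
      (hdiff (t • v)).comp_hasDerivAt t (line v t)
    have h2 : HasDerivAt (fun s : ℝ => s ^ 2 * G v) (2 * t * G v) t := by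
      have := (hasDerivAt_pow 2 t).mul_const (G v)
      simpa [mul_comm, mul_assoc] using this
    rw [show (fun s : ℝ => G (s • v)) = fun s : ℝ => s ^ 2 * G v from funext fun s => hreal s v] at h1
    exact h1.unique h2
  have key1 : ∀ v, A v v = 2 * G v := by
    intro v
    have h0 : HasFDerivAt (fderiv ℝ G) A ((0:ℝ) • v) := by rw [zero_smul]; exact hA
    have h1 : HasDerivAt (fun t : ℝ => fderiv ℝ G (t • v)) (A v) 0 :=
      h0.comp_hasDerivAt 0 (line v 0)
    have h2 : HasDerivAt (fun t : ℝ => fderiv ℝ G (t • v) v) (A v v) 0 := by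
      have := h1.clm_apply (hasDerivAt_const 0 v)
      simpa using this
    have h3 : HasDerivAt (fun t : ℝ => 2 * t * G v) (2 * G v) 0 := by
      have := ((hasDerivAt_id (0:ℝ)).const_mul 2).mul_const (G v)
      simpa using this
    rw [show (fun t : ℝ => fderiv ℝ G (t • v) v) = fun t : ℝ => 2 * t * G v from
      funext fun t => phi_eq v t] at h2
    exact h2.unique h3
  have hGderiv : ∀ v, HasFDerivAt G (A v) v := by
    intro v
    have hbil := A.hasFDerivAt_of_bilinear (hasFDerivAt_id v) (hasFDerivAt_id v)
    have hhalf := hbil.const_mul (1/2 : ℝ)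
    have hfun : G = fun u => (1/2 : ℝ) * A u u := funext fun u => by
      have := key1 u; linarith
    have hCLM : (1/2 : ℝ) • (A.precompR (Fin (r+1) → ℂ) v (ContinuousLinearMap.id ℝ _)
        + A.precompL (Fin (r+1) → ℂ) (ContinuousLinearMap.id ℝ _) v) = A v := by
      ext w
      simp only [ContinuousLinearMap.smul_apply, ContinuousLinearMap.add_apply,
        ContinuousLinearMap.precompR_apply, ContinuousLinearMap.precompL_apply,
        ContinuousLinearMap.id_apply, id_eq, smul_eq_mul,
        ContinuousLinearMap.compL_apply, ContinuousLinearMap.coe_comp', Function.comp_apply]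
      have := hsymm w v; linarith
    rw [hfun]
    rw [← hCLM]
    exact hhalf
  have key2 : ∀ v, fderiv ℝ G v = A v := fun v => (hGderiv v).fderiv
  -- invariance under multiplication by I
  have hGI : ∀ u, G (Complex.I • u) = G u := by
    intro u; simpa using hhom Complex.I u
  have hinv : ∀ u w, A (Complex.I • u) (Complex.I • w) = A u w := by
    intro u w
    have e1 : ∀ a b : Fin (r+1) → ℂ, A (a+b) (a+b) = A a a + A a b + A b a + A b b := by
      intro a b
      simp only [map_add, ContinuousLinearMap.add_apply]
      ring
    have h1 := key1 (Complex.I • u + Complex.I • w)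
    rw [e1] at h1
    rw [← smul_add, hGI] at h1
    have h2 := key1 (u + w)
    rw [e1] at h2
    have hu := key1 (Complex.I • u); rw [hGI] at hu
    have hw := key1 (Complex.I • w); rw [hGI] at hw
    have hu' := key1 u
    have hw' := key1 w
    have hs1 := hsymm (Complex.I • u) (Complex.I • w)
    have hs2 := hsymm u w
    linarith
  have hIleft : ∀ u w, A (Complex.I • u) w = - A u (Complex.I • w) := by
    intro u w
    have h := hinv (Complex.I • u) w
    rw [aux_II] at h
    rw [← h]
    simp [map_neg]
  have hzero : ∀ u, A u (Complex.I • u) = 0 := by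
    intro u
    have h := hinv u (Complex.I • u)
    rw [aux_II] at h
    have h2 : A (Complex.I • u) (-u) = - A (Complex.I • u) u := by simp
    rw [h2] at h
    have h3 := hsymm (Complex.I • u) u
    linarith
  -- the sesquilinear form
  set S : (Fin (r+1) → ℂ) → (Fin (r+1) → ℂ) → ℂ :=
      fun u w => (A u w : ℂ) + Complex.I * (A u (Complex.I • w) : ℂ) with hS_def
  have hS_add_left : ∀ u u' w, S (u + u') w = S u w + S u' w := by
    intro u u' w
    simp only [hS_def, map_add, ContinuousLinearMap.add_apply]
    push_cast
    ring
  have hS_add_right : ∀ u w w', S u (w + w') = S u w + S u w' := by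
    intro u w w'
    simp only [hS_def, smul_add, map_add, ContinuousLinearMap.add_apply]
    push_cast
    ring
  have hS_I_left : ∀ u w, S (Complex.I • u) w = Complex.I * S u w := by
    intro u w
    simp only [hS_def]
    rw [hIleft u w, hinv u w]
    push_cast
    linear_combination (-(((A u) (Complex.I • w) : ℝ) : ℂ)) * Complex.I_sq
  have hS_I_right : ∀ u w, S u (Complex.I • w) = -Complex.I * S u w := by
    intro u w
    simp only [hS_def]
    rw [aux_II]
    simp only [map_neg, ContinuousLinearMap.neg_apply]
    push_cast
    linear_combination (((A u) (Complex.I • w) : ℝ) : ℂ) * Complex.I_sq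
  have hS_real_left : ∀ (t : ℝ) u w, S (t • u) w = (t : ℂ) * S u w := by
    intro t u w
    simp only [hS_def, map_smul, ContinuousLinearMap.smul_apply, smul_eq_mul]
    push_cast
    ring
  have hS_real_right : ∀ (t : ℝ) u w, S u (t • w) = (t : ℂ) * S u w := by
    intro t u w
    have hcomm : Complex.I • (t • w) = t • (Complex.I • w) := smul_comm _ _ _
    simp only [hS_def, hcomm, map_smul, smul_eq_mul]
    push_cast
    ring
  have hS_smul_left : ∀ (c : ℂ) u w, S (c • u) w = c * S u w := by
    intro c u w
    rw [aux_csmul c u, hS_add_left, hS_real_left, hS_real_left, hS_I_left]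
    rw [← Complex.re_add_im c]
    push_cast
    ring_nf
    rw [Complex.re_add_im c]
    ring_nf
  have hS_smul_right : ∀ (c : ℂ) u w, S u (c • w) = (starRingEnd ℂ) c * S u w := by
    intro c u w
    rw [aux_csmul c w, hS_add_right, hS_real_right, hS_real_right, hS_I_right]
    have hconj : (starRingEnd ℂ) c = (c.re : ℂ) - (c.im : ℂ) * Complex.I := by
      simp [Complex.ext_iff]
    rw [hconj]
    ring
  have hS_diag : ∀ v, S v v = 2 * (G v : ℂ) := by
    intro v
    simp only [hS_def, hzero v, key1 v]
    push_cast
    ring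
  -- the derivative of the complexified G
  have hGc_deriv : ∀ v, HasFDerivAt (fun u => (G u : ℂ))
      (Complex.ofRealCLM.comp (A v)) v := fun v =>
    (Complex.ofRealCLM.hasFDerivAt).comp v (hGderiv v)
  have wbar_eq : ∀ (j : Fin (r+1)) v, wDerivBar j (fun u => (G u : ℂ)) v
      = (1/2 : ℂ) * S v (Pi.single j 1) := by
    intro j v
    unfold wDerivBar
    rw [(hGc_deriv v).fderiv]
    simp only [ContinuousLinearMap.coe_comp', Function.comp_apply, Complex.ofRealCLM_apply,
      hS_def, aux_singleI j]
  -- the continuous linear map equal to `v ↦ wDerivBar j Gc v`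
  set T : Fin (r+1) → ((Fin (r+1) → ℂ) →L[ℝ] ℂ) := fun j =>
    (1/2 : ℂ) • (Complex.ofRealCLM.comp (A.flip (Pi.single j 1))
      + Complex.I • Complex.ofRealCLM.comp (A.flip (Pi.single j Complex.I))) with hT_def
  have hT_apply : ∀ (j : Fin (r+1)) w, T j w = (1/2 : ℂ) * S w (Pi.single j 1) := by
    intro j w
    simp only [hT_def, hS_def, ContinuousLinearMap.smul_apply, ContinuousLinearMap.add_apply,
      ContinuousLinearMap.coe_comp', Function.comp_apply, Complex.ofRealCLM_apply,
      ContinuousLinearMap.flip_apply, smul_eq_mul, aux_singleI j]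
  have hTfderiv : ∀ (j : Fin (r+1)) v,
      fderiv ℝ (wDerivBar j (fun u => (G u : ℂ))) v = T j := by
    intro j v
    have hfe : (wDerivBar j (fun u => (G u : ℂ))) = ⇑(T j) := by
      funext w
      rw [wbar_eq j w, hT_apply j w]
    rw [hfe]
    exact (T j).fderiv
  have hess_eq : ∀ (i j : Fin (r+1)) v, hessW i j G v
      = (1/2 : ℂ) * (T j (Pi.single i 1) - Complex.I * T j (Pi.single i Complex.I)) := by
    intro i j v
    unfold hessW wDeriv
    rw [hTfderiv j v]
  have hess_S : ∀ i j : Fin (r+1), hessW i j G 0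
      = (1/2 : ℂ) * S (Pi.single i 1) (Pi.single j 1) := by
    intro i j
    rw [hess_eq i j 0, hT_apply, hT_apply, aux_singleI i, hS_I_left]
    set z := S (Pi.single i 1 : Fin (r+1) → ℂ) (Pi.single j 1 : Fin (r+1) → ℂ)
    linear_combination (-(1/4 : ℂ) * z) * Complex.I_sq
  refine ⟨?_, ?_, ?_⟩
  · intro v _ i j
    rw [hess_eq i j v, hess_eq i j 0]
  · intro v
    have hterm : ∀ i j : Fin (r+1), hessW i j G 0 * v i * (starRingEnd ℂ) (v j)
        = ((1/2 : ℂ) * v i) * S ((Pi.single i 1 : Fin (r+1) → ℂ)) (v j • (Pi.single j 1 : Fin (r+1) → ℂ)) := by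
      intro i j
      rw [hess_S i j, hS_smul_right]
      ring
    have hsum_right : ∀ u, ∑ j, S u (v j • (Pi.single j 1 : Fin (r+1) → ℂ)) = S u v := by
      intro u
      let φ : (Fin (r+1) → ℂ) →+ ℂ := AddMonoidHom.mk' (fun w => S u w)
        (fun a b => hS_add_right u a b)
      calc ∑ j, S u (v j • (Pi.single j 1 : Fin (r+1) → ℂ)) = φ (∑ j, v j • (Pi.single j 1 : Fin (r+1) → ℂ)) :=
            (map_sum φ _ _).symm
        _ = S u v := by rw [aux_basis v]; rfl
    have hsum_left : ∑ i, v i * S ((Pi.single i 1 : Fin (r+1) → ℂ)) v = S v v := by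
      let ψ : (Fin (r+1) → ℂ) →+ ℂ := AddMonoidHom.mk' (fun w => S w v)
        (fun a b => hS_add_left a b v)
      calc ∑ i, v i * S ((Pi.single i 1 : Fin (r+1) → ℂ)) v = ∑ i, S (v i • (Pi.single i 1 : Fin (r+1) → ℂ)) v :=
            Finset.sum_congr rfl fun i _ => by rw [hS_smul_left]
        _ = ψ (∑ i, v i • (Pi.single i 1 : Fin (r+1) → ℂ)) := (map_sum ψ _ _).symm
        _ = S v v := by rw [aux_basis v]; rfl
    calc (G v : ℂ) = (1/2 : ℂ) * S v v := by rw [hS_diag v]; ring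
      _ = (1/2 : ℂ) * ∑ i, v i * S ((Pi.single i 1 : Fin (r+1) → ℂ)) v := by rw [hsum_left]
      _ = ∑ i, (1/2 : ℂ) * v i * S ((Pi.single i 1 : Fin (r+1) → ℂ)) v := by
          rw [Finset.mul_sum]
          exact Finset.sum_congr rfl fun i _ => by ring
      _ = ∑ i, ∑ j, hessW i j G 0 * v i * (starRingEnd ℂ) (v j) := by
          refine Finset.sum_congr rfl fun i _ => ?_
          calc (1/2 : ℂ) * v i * S ((Pi.single i 1 : Fin (r+1) → ℂ)) v
              = ∑ j, (1/2 : ℂ) * v i * S ((Pi.single i 1 : Fin (r+1) → ℂ)) (v j • (Pi.single j 1 : Fin (r+1) → ℂ)) := by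
                rw [← hsum_right ((Pi.single i 1 : Fin (r+1) → ℂ)), Finset.mul_sum]
            _ = ∑ j, hessW i j G 0 * v i * (starRingEnd ℂ) (v j) :=
                Finset.sum_congr rfl fun j _ => (hterm i j).symm
  · intro i j
    rw [hess_S i j, hess_S j i]
    have r1 : A ((Pi.single j 1 : Fin (r+1) → ℂ)) ((Pi.single i 1 : Fin (r+1) → ℂ)) = A ((Pi.single i 1 : Fin (r+1) → ℂ)) ((Pi.single j 1 : Fin (r+1) → ℂ)) :=
      hsymm _ _
    have r2 : A ((Pi.single j 1 : Fin (r+1) → ℂ)) (Complex.I • (Pi.single i 1 : Fin (r+1) → ℂ))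
        = - A ((Pi.single i 1 : Fin (r+1) → ℂ)) (Complex.I • (Pi.single j 1 : Fin (r+1) → ℂ)) := by
      have h := hIleft ((Pi.single i 1 : Fin (r+1) → ℂ)) ((Pi.single j 1 : Fin (r+1) → ℂ))
      have h2 := hsymm (Complex.I • (Pi.single i 1 : Fin (r+1) → ℂ)) ((Pi.single j 1 : Fin (r+1) → ℂ))
      linarith
    simp only [hS_def, map_mul, map_add, Complex.conj_I, Complex.conj_ofReal, map_div₀,
      map_one, map_ofNat]
    rw [r1, r2]
    push_cast
    ring
end

section
/- Let r₀ > 0 and let w : [r₀, ∞) → ℝ be a C¹ function which is monotone increasing and satisfies w(r₀) > 0. Then the Lebesgue measure of the set B = { r ≥ r₀ : w'(r) > w(r)² } is at most 1/w(r₀); in particular B has finite Lebesgue measure. -/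
open MeasureTheory

/-- Borel-type growth lemma from the proof of Proposition (7.7): if `w` is a `C¹`,
monotone increasing function on `[r₀, ∞)` with `w r₀ > 0`, then the set of `r ≥ r₀`
where `w'(r) > w(r)²` has Lebesgue measure at most `1 / w r₀`. -/
theorem stmt_6 (r₀ : ℝ) (hr₀ : 0 < r₀) (w : ℝ → ℝ)
    (hC1 : ContDiffOn ℝ 1 w (Set.Ici r₀))
    (hmono : MonotoneOn w (Set.Ici r₀))
    (hpos : 0 < w r₀) :
    volume {r : ℝ | r₀ ≤ r ∧ (w r) ^ 2 < derivWithin w (Set.Ici r₀) r}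
      ≤ ENNReal.ofReal (1 / w r₀) := by
  set s : Set ℝ := Set.Ici r₀ with hsdef
  have hsu : UniqueDiffOn ℝ s := uniqueDiffOn_Ici r₀
  set f : ℝ → ℝ := derivWithin w s with hfdef
  set B : Set ℝ := {r : ℝ | r₀ ≤ r ∧ (w r) ^ 2 < f r} with hBdef
  have hwpos : ∀ r ∈ s, 0 < w r := fun r hr =>
    lt_of_lt_of_le hpos (hmono Set.self_mem_Ici hr hr)
  have hdiff : ∀ r ∈ s, HasDerivWithinAt w (f r) s r := fun r hr =>
    ((hC1.differentiableOn one_ne_zero) r hr).hasDerivWithinAt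
  have hfcont : ContinuousOn f s := hC1.continuousOn_derivWithin hsu le_rfl
  have hwcont : ContinuousOn w s := hC1.continuousOn
  -- the derivative is nonnegative
  have hf0 : ∀ r ∈ s, 0 ≤ f r := by
    intro r hr
    have h1 : HasDerivWithinAt w (f r) (Set.Ioi r) r := by
      exact hdiff r hr |>.mono (fun y hy => show r₀ ≤ y from le_trans hr (le_of_lt hy))
    have h2 := hasDerivWithinAt_iff_tendsto_slope.1 h1
    have hIoi : (Set.Ioi r) \ {r} = Set.Ioi r := by
      ext y; simp only [Set.mem_diff, Set.mem_Ioi, Set.mem_singleton_iff]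
      exact ⟨fun h => h.1, fun h => ⟨h, ne_of_gt h⟩⟩
    rw [hIoi] at h2
    refine ge_of_tendsto h2 ?_
    filter_upwards [self_mem_nhdsWithin] with y hy
    have hy' : r < y := hy
    have : w r ≤ w y := hmono hr (le_trans hr hy'.le) hy'.le
    show 0 ≤ slope w r y
    rw [slope_def_field]
    exact div_nonneg (by linarith) (by linarith)
  -- measurability of B
  have hBmeas : MeasurableSet B := by
    have hcont : ContinuousOn (fun r => f r - (w r) ^ 2) s :=
      hfcont.sub ((hwcont.pow 2))
    obtain ⟨u, hu, huu⟩ := continuousOn_iff'.1 hcont (Set.Ioi 0) isOpen_Ioi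
    have : B = u ∩ s := by
      rw [← huu]
      ext r
      simp only [hBdef, Set.mem_setOf_eq, Set.mem_inter_iff, Set.mem_preimage, Set.mem_Ioi,
        hsdef, Set.mem_Ici]
      constructor
      · rintro ⟨h1, h2⟩; exact ⟨by linarith, h1⟩
      · rintro ⟨h1, h2⟩; exact ⟨h2, by linarith⟩
    rw [this]
    exact hu.measurableSet.inter measurableSet_Ici
  -- the auxiliary function g = -1/w and its derivative
  set g : ℝ → ℝ := fun r => -(w r)⁻¹ with hgdef
  have hg' : ∀ r ∈ s, HasDerivWithinAt g (f r / (w r) ^ 2) s r := by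
    intro r hr
    have := ((hdiff r hr).inv (ne_of_gt (hwpos r hr))).neg
    rw [show f r / w r ^ 2 = -(-f r / w r ^ 2) by ring]
    exact this
  have hgcont : ContinuousOn g s := (hwcont.inv₀ (fun r hr => ne_of_gt (hwpos r hr))).neg
  -- main bound on bounded pieces
  have key : ∀ T : ℝ, r₀ ≤ T →
      volume (B ∩ Set.Icc r₀ T) ≤ ENNReal.ofReal (1 / w r₀) := by
    intro T hT
    set S : Set ℝ := B ∩ Set.Icc r₀ T with hSdef
    have hSsub : S ⊆ Set.Icc r₀ T := Set.inter_subset_right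
    have hSs : S ⊆ s := fun x hx => hx.1.1
    have hSmeas : MeasurableSet S := hBmeas.inter measurableSet_Icc
    have hSfin : volume S < ⊤ :=
      lt_of_le_of_lt (measure_mono hSsub) measure_Icc_lt_top
    have hIccs : Set.Icc r₀ T ⊆ s := fun x hx => hx.1
    set g' : ℝ → ℝ := fun r => f r / (w r) ^ 2 with hg'def
    have hg'cont : ContinuousOn g' (Set.Icc r₀ T) :=
      ((hfcont.mono hIccs).div ((hwcont.mono hIccs).pow 2)
        (fun x hx => pow_ne_zero 2 (ne_of_gt (hwpos x (hIccs hx)))))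
    have hint : IntegrableOn g' (Set.Icc r₀ T) := hg'cont.integrableOn_Icc
    have step1 : (volume S).toReal = ∫ x in S, (1 : ℝ) := by
      rw [setIntegral_const, smul_eq_mul, mul_one]; rfl
    have step2 : ∫ x in S, (1 : ℝ) ≤ ∫ x in S, g' x := by
      refine setIntegral_mono_on (integrableOn_const hSfin.ne)
        (hint.mono_set hSsub) hSmeas ?_
      intro x hx
      have hx1 : (w x) ^ 2 < f x := hx.1.2
      have hwx : 0 < w x := hwpos x (hSs hx)
      rw [le_div_iff₀ (by positivity)]
      linarith
    have step3 : ∫ x in S, g' x ≤ ∫ x in Set.Icc r₀ T, g' x := by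
      refine setIntegral_mono_set hint ?_ (Filter.Eventually.of_forall hSsub)
      filter_upwards [ae_restrict_mem measurableSet_Icc] with x hx
      exact div_nonneg (hf0 x (hIccs hx)) (by positivity)
    have step4 : ∫ x in Set.Icc r₀ T, g' x = g T - g r₀ := by
      rw [MeasureTheory.integral_Icc_eq_integral_Ioc,
        ← intervalIntegral.integral_of_le hT]
      refine intervalIntegral.integral_eq_sub_of_hasDeriv_right_of_le hT
        (hgcont.mono hIccs) (fun x hx => ?_) ?_
      · exact (hg' x (hIccs (Set.mem_Icc_of_Ioo hx))).mono
          (fun y hy => show r₀ ≤ y from le_trans (le_of_lt hx.1) (le_of_lt hy))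
      · exact (hg'cont.mono (by rw [Set.uIcc_of_le hT])).intervalIntegrable
    have step5 : g T - g r₀ ≤ 1 / w r₀ := by
      have hwT : 0 < w T := hwpos T hT
      have : 0 < (w T)⁻¹ := inv_pos.2 hwT
      simp only [hgdef, one_div]
      linarith
    have : (volume S).toReal ≤ 1 / w r₀ := by
      rw [step1]; exact le_trans step2 (le_trans step3 (by rw [step4]; exact step5))
    calc volume S = ENNReal.ofReal (volume S).toReal := (ENNReal.ofReal_toReal hSfin.ne).symm
      _ ≤ ENNReal.ofReal (1 / w r₀) := ENNReal.ofReal_le_ofReal this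
  -- exhaust B by bounded pieces
  have hBunion : B = ⋃ n : ℕ, B ∩ Set.Icc r₀ (r₀ + n) := by
    ext r
    simp only [Set.mem_iUnion, Set.mem_inter_iff, Set.mem_Icc]
    constructor
    · intro hr
      refine ⟨⌈r - r₀⌉₊, hr, hr.1, ?_⟩
      have := Nat.le_ceil (r - r₀)
      linarith
    · rintro ⟨n, hn, _⟩; exact hn
  have hmonoB : Monotone (fun n : ℕ => B ∩ Set.Icc r₀ (r₀ + n)) := by
    intro m n hmn
    refine Set.inter_subset_inter le_rfl (Set.Icc_subset_Icc le_rfl ?_)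
    have : (m : ℝ) ≤ n := Nat.cast_le.2 hmn
    linarith
  rw [hBunion, hmonoB.measure_iUnion]
  exact iSup_le fun n => key (r₀ + n) (le_add_of_nonneg_right (Nat.cast_nonneg n))
end

section
/- Let V be a real vector space equipped with a norm ‖·‖ and with a metric d, and assume that every d-Cauchy sequence (σ_p)_{p≥1} in V with sup_p ‖σ_p‖ < ∞ converges in the metric d to an element of V. Let (G_p)_{p≥1} be a sequence of d-open subsets of V such that for every p ≥ 1, every σ ∈ V and all ε > 0, δ > 0 there exists σ' ∈ G_p with d(σ, σ') < ε and ‖σ − σ'‖ < δ. Then the intersection ⋂_{p≥1} G_p is dense in V with respect to the metric d. -/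
/-!
Run the proof of the Baire category theorem inside a closed ball around a given point: choose
`σₚ₊₁ ∈ Gₚ` close to `σₚ` together with a closed ball around it inside `Gₚ`, of at most half the
previous radius. Approximating in `N` as well, with `N (σₚ - σₚ₊₁) < 2⁻ᵖ`, keeps the sequence
bounded in `N` by `N σ₀ + 2`. So the Cauchy sequence of centres converges, and its limit lies in
every ball, hence in every `Gₚ`.
-/

open Filter Metric Set Topology

theorem exists_seq_of_forall_exists {α : Type*} {P : α → Prop} {R : ℕ → α → α → Prop} {a : α}
    (ha : P a) (h : ∀ n x, P x → ∃ y, P y ∧ R n x y) :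
    ∃ f : ℕ → α, f 0 = a ∧ ∀ n, P (f n) ∧ R n (f n) (f (n + 1)) := by
  choose g hg using fun n (x : Subtype P) => h n x x.2
  let f : ℕ → Subtype P := fun n => Nat.rec ⟨a, ha⟩ (fun n x => ⟨g n x, (hg n x).1⟩) n
  exact ⟨fun n => (f n).1, rfl, fun n => ⟨(f n).2, (hg n (f n)).2⟩⟩

theorem tendsto_zero_of_le_half {u : ℕ → ℝ} (h0 : ∀ n, 0 ≤ u n) (h : ∀ n, u (n + 1) ≤ u n / 2) :
    Tendsto u atTop (𝓝 0) := by
  have hle : ∀ n, u n ≤ u 0 * (1 / 2) ^ n := by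
    intro n
    induction n with
    | zero => simp
    | succ n ih => rw [pow_succ]; linarith [h n]
  refine squeeze_zero h0 hle ?_
  simpa using (tendsto_pow_atTop_nhds_zero_of_lt_one (r := (1 / 2 : ℝ)) (by norm_num)
    (by norm_num)).const_mul (u 0)

theorem AddGroupSeminorm.map_le_add_two_of_le_geometric {V : Type*} [AddGroup V]
    (N : AddGroupSeminorm V) {σ : ℕ → V} (h : ∀ n, N (σ n - σ (n + 1)) ≤ (1 / 2) ^ n) (n : ℕ) :
    N (σ n) ≤ N (σ 0) + 2 := by
  have htele : N (σ n) ≤ N (σ 0) + ∑ i ∈ Finset.range n, N (σ i - σ (i + 1)) := by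
    induction n with
    | zero => simp
    | succ n ih =>
      rw [Finset.sum_range_succ]
      linarith [le_map_add_map_sub' N (σ (n + 1)) (σ n)]
  calc N (σ n) ≤ N (σ 0) + ∑ i ∈ Finset.range n, N (σ i - σ (i + 1)) := htele
    _ ≤ N (σ 0) + 2 := by
      gcongr
      exact (Finset.sum_le_sum fun i _ => h i).trans (sum_geometric_two_le n)

section NestedBalls

variable {X : Type*} [PseudoMetricSpace X] {c : ℕ → X} {ρ : ℕ → ℝ}

theorem mem_closedBall_of_closedBall_succ_subset (hρ : ∀ p, 0 ≤ ρ p)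
    (hnest : ∀ p, closedBall (c (p + 1)) (ρ (p + 1)) ⊆ closedBall (c p) (ρ p)) {p q : ℕ}
    (hpq : p ≤ q) : c q ∈ closedBall (c p) (ρ p) :=
  antitone_nat_of_succ_le (f := fun p => closedBall (c p) (ρ p)) hnest hpq
    (mem_closedBall_self (hρ q))

theorem cauchySeq_of_closedBall_succ_subset (hρ : ∀ p, 0 ≤ ρ p)
    (hnest : ∀ p, closedBall (c (p + 1)) (ρ (p + 1)) ⊆ closedBall (c p) (ρ p))
    (hρ_lim : Tendsto ρ atTop (𝓝 0)) : CauchySeq c := by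
  refine cauchySeq_of_le_tendsto_0 (fun p => 2 * ρ p) (fun n m p hn hm => ?_) ?_
  · have hcn := mem_closedBall_of_closedBall_succ_subset hρ hnest hn
    have hcm := mem_closedBall_of_closedBall_succ_subset hρ hnest hm
    rw [mem_closedBall] at hcn hcm
    linarith [dist_triangle_right (c n) (c m) (c p)]
  · simpa using hρ_lim.const_mul 2

theorem mem_closedBall_of_tendsto_of_closedBall_succ_subset (hρ : ∀ p, 0 ≤ ρ p)
    (hnest : ∀ p, closedBall (c (p + 1)) (ρ (p + 1)) ⊆ closedBall (c p) (ρ p)) {y : X}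
    (hy : Tendsto c atTop (𝓝 y)) (p : ℕ) : y ∈ closedBall (c p) (ρ p) :=
  isClosed_closedBall.mem_of_tendsto hy <| (eventually_ge_atTop p).mono fun _ hq =>
    mem_closedBall_of_closedBall_succ_subset hρ hnest hq

end NestedBalls

section ApproxDense

variable {V : Type*} [AddGroup V] [PseudoMetricSpace V]

def ApproxDense (N : AddGroupSeminorm V) (U : Set V) : Prop :=
  ∀ (x : V) (ε δ : ℝ), 0 < ε → 0 < δ → ∃ y ∈ U, dist x y < ε ∧ N (x - y) < δ

theorem ApproxDense.exists_closedBall_subset {N : AddGroupSeminorm V} {U : Set V}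
    (hU : ApproxDense N U) (hU_open : IsOpen U) (x : V) {r δ : ℝ} (hr : 0 < r) (hδ : 0 < δ) :
    ∃ y s, 0 < s ∧ s ≤ r / 2 ∧ N (x - y) < δ ∧ closedBall y s ⊆ closedBall x r ∩ U := by
  obtain ⟨y, hyU, hxy, hNxy⟩ := hU x (r / 2) δ (half_pos hr) hδ
  obtain ⟨t, ht, hball⟩ := Metric.isOpen_iff.mp hU_open y hyU
  refine ⟨y, min (r / 2) (t / 2), lt_min (half_pos hr) (half_pos ht), min_le_left _ _, hNxy,
    subset_inter ?_ ?_⟩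
  · refine closedBall_subset_closedBall' ?_
    rw [dist_comm]
    linarith [min_le_left (r / 2) (t / 2)]
  · exact (closedBall_subset_ball ((min_le_right _ _).trans_lt (half_lt_self ht))).trans hball

theorem dense_iInter_of_approxDense (N : AddGroupSeminorm V)
    (hcomplete : ∀ σ : ℕ → V, CauchySeq σ → (∃ C : ℝ, ∀ p, N (σ p) ≤ C) →
      ∃ x : V, Tendsto σ atTop (𝓝 x))
    {G : ℕ → Set V} (hopen : ∀ p, IsOpen (G p)) (hG : ∀ p, ApproxDense N (G p)) :
    Dense (⋂ p, G p) := by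
  rw [Metric.dense_iff]
  intro x ε hε
  obtain ⟨f, hf0, hf⟩ := exists_seq_of_forall_exists (P := fun a : V × ℝ => 0 < a.2)
    (R := fun p a b => b.2 ≤ a.2 / 2 ∧ N (a.1 - b.1) < (1 / 2) ^ p ∧
      closedBall b.1 b.2 ⊆ closedBall a.1 a.2 ∩ G p) (a := (x, ε / 2)) (half_pos hε)
    fun p a ha => by
      obtain ⟨y, s, hs, hsr, hN, hsub⟩ :=
        (hG p).exists_closedBall_subset (hopen p) a.1 ha (by positivity : (0 : ℝ) < (1 / 2) ^ p)
      exact ⟨(y, s), hs, hsr, hN, hsub⟩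
  set c := fun p => (f p).1
  set ρ := fun p => (f p).2
  have hρ : ∀ p, 0 ≤ ρ p := fun p => (hf p).1.le
  have hnest : ∀ p, closedBall (c (p + 1)) (ρ (p + 1)) ⊆ closedBall (c p) (ρ p) :=
    fun p => (hf p).2.2.2.trans inter_subset_left
  have hNc : ∀ p, N (c p) ≤ N x + 2 := by
    simpa [c, hf0] using N.map_le_add_two_of_le_geometric fun p => (hf p).2.2.1.le
  obtain ⟨y, hy⟩ := hcomplete c
    (cauchySeq_of_closedBall_succ_subset hρ hnest
      (tendsto_zero_of_le_half hρ fun p => (hf p).2.1)) ⟨_, hNc⟩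
  have hyc := mem_closedBall_of_tendsto_of_closedBall_succ_subset hρ hnest hy
  refine ⟨y, ?_, mem_iInter.2 fun p => ((hf p).2.2.2 (hyc (p + 1))).2⟩
  have hyx : y ∈ closedBall x (ε / 2) := by simpa [c, ρ, hf0] using hyc 0
  exact closedBall_subset_ball (half_lt_self hε) hyx

end ApproxDense

theorem stmt_9_general {V : Type*} [AddCommGroup V] [Module ℝ V] [MetricSpace V]
    (N : V → ℝ)
    (hNadd : ∀ v w : V, N (v + w) ≤ N v + N w)
    (hNsmul : ∀ (a : ℝ) (v : V), N (a • v) = |a| * N v)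
    (hcomplete : ∀ σ : ℕ → V, CauchySeq σ → (∃ C : ℝ, ∀ p, N (σ p) ≤ C) →
      ∃ x : V, Tendsto σ atTop (nhds x))
    (G : ℕ → Set V) (hopen : ∀ p, IsOpen (G p))
    (hdense : ∀ (p : ℕ) (σ : V) (ε δ : ℝ), 0 < ε → 0 < δ →
      ∃ σ' ∈ G p, dist σ σ' < ε ∧ N (σ - σ') < δ) :
    Dense (⋂ p, G p) :=
  dense_iInter_of_approxDense (Seminorm.of N hNadd hNsmul).toAddGroupSeminorm hcomplete hopen hdense

/-- The Baire-category-type argument from the proof of Theorem (6.5): in a real vector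
space `V` carrying a metric `d` and a norm `N`, in which every `d`-Cauchy sequence that
is bounded in `N` converges, the intersection of a sequence of `d`-open sets, each of
which can be approached simultaneously in `d` and in `N`, is `d`-dense. -/
theorem stmt_9 {V : Type*} [AddCommGroup V] [Module ℝ V] [MetricSpace V]
    (N : V → ℝ)
    (hN0 : ∀ v : V, 0 ≤ N v)
    (hNadd : ∀ v w : V, N (v + w) ≤ N v + N w)
    (hNsmul : ∀ (a : ℝ) (v : V), N (a • v) = |a| * N v)
    (hcomplete : ∀ σ : ℕ → V, CauchySeq σ → (∃ C : ℝ, ∀ p, N (σ p) ≤ C) →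
      ∃ x : V, Tendsto σ atTop (nhds x))
    (G : ℕ → Set V) (hopen : ∀ p, IsOpen (G p))
    (hdense : ∀ (p : ℕ) (σ : V) (ε δ : ℝ), 0 < ε → 0 < δ →
      ∃ σ' ∈ G p, dist σ σ' < ε ∧ N (σ - σ') < δ) :
    Dense (⋂ p, G p) :=
  stmt_9_general N hNadd hNsmul hcomplete G hopen hdense
end
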